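/- arXiv:1706.02763 — 2 statements merged into one kernel-verified Lean document; each statement's English description precedes it below -/
import Mathlib

section
/- Let X be a type, let p ≥ 2 be a natural number, and let R₁ and R₂ be equivalence relations on X. Then R₁ = R₂ if and only if F(R₁) = F(R₂). -/
namespace Setoid

variable {X : Type*}

open Classical in
theorem le_of_forall_le_ker_imp_le_ker (Y : Type*) [Nontrivial Y] {R₁ R₂ : Setoid X}
    (h : ∀ f : X → Y, R₁ ≤ ker f → R₂ ≤ ker f) : R₂ ≤ R₁ := by
  intro x y hxy
  obtain ⟨a, b, hab⟩ := exists_pair_ne Y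
  -- Two values suffice: the indicator of the `R₁`-class of `x` already separates it.
  let indicator : X → Y := fun z => if (⟦z⟧ : Quotient R₁) = ⟦x⟧ then a else b
  have indicator_invariant : R₁ ≤ ker indicator := fun z w hzw => by
    simp only [ker_def, indicator, Quotient.sound hzw]
  have hy : indicator y = a := by
    simpa only [indicator, if_pos rfl] using (h indicator indicator_invariant hxy).symm
  have same_class : (⟦y⟧ : Quotient R₁) = ⟦x⟧ := by
    by_contra hne
    exact hab (by simpa only [indicator, if_neg hne] using hy.symm)
  exact Quotient.exact same_class.symm

theorem le_iff_forall_le_ker_imp_le_ker (Y : Type*) [Nontrivial Y] {R₁ R₂ : Setoid X} :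
    R₂ ≤ R₁ ↔ ∀ f : X → Y, R₁ ≤ ker f → R₂ ≤ ker f :=
  ⟨fun h₂₁ _ h₁ => h₂₁.trans h₁, le_of_forall_le_ker_imp_le_ker Y⟩

end Setoid

/-- Proposition 2: two equivalence relations on `X` are equal iff the sets of
functions `X → Fin p` (for `p ≥ 2`) constant on their classes coincide. -/
theorem setoid_eq_iff_constant_functions_eq (X : Type*) (p : ℕ) (hp : 2 ≤ p)
    (R₁ R₂ : Setoid X) :
    R₁ = R₂ ↔
      {f : X → Fin p | ∀ x y, R₁.r x y → f x = f y} =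
        {f : X → Fin p | ∀ x y, R₂.r x y → f x = f y} := by
  have : Nontrivial (Fin p) := Fin.nontrivial_iff_two_le.2 hp
  rw [le_antisymm_iff, Set.Subset.antisymm_iff,
    Setoid.le_iff_forall_le_ker_imp_le_ker (Fin p), Setoid.le_iff_forall_le_ker_imp_le_ker (Fin p)]
  exact and_comm
end

section
/- Let X be a type, let p ≥ 2 be a natural number, let R and S be equivalence relations on X, and let a, b be natural numbers. If for every function f : X → Fin p one has p^a * (if f ∈ F(R) then 1 else 0) = p^b * (if f ∈ F(S) then 1 else 0) (equality of natural numbers), then a = b and R = S. -/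
/-!
Evaluating the hypothesis at a constant function, which lies in both `F(R)` and `F(S)`, gives
`p ^ a = p ^ b`, hence `a = b`; cancelling `p ^ a` then gives `F(R) = F(S)`. An equivalence
relation is recovered from `F(R)` as soon as `p ≥ 2`: the function taking one value on the
`R`-class of `x` and another value elsewhere lies in `F(R)`, and it separates `x` from every `y`
outside that class.
-/

namespace Setoid

variable {X β : Type*}

/-- The set `F(R)` of the paper, for `β = Fin p`. -/
def constOnClasses (R : Setoid X) (β : Type*) : Set (X → β) :=
  {f | ∀ x y, R.r x y → f x = f y}

theorem const_mem_constOnClasses (R : Setoid X) (b : β) :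
    (fun _ => b) ∈ R.constOnClasses β :=
  fun _ _ _ => rfl

theorem le_of_constOnClasses_subset [Nontrivial β] {R S : Setoid X}
    (h : R.constOnClasses β ⊆ S.constOnClasses β) : S ≤ R := by
  classical
  obtain ⟨b₀, b₁, hb⟩ := exists_pair_ne β
  intro x y hS
  let f : X → β := fun z => if R.r x z then b₀ else b₁
  have hf : f ∈ R.constOnClasses β := fun u v huv => by
    have : R.r x u ↔ R.r x v := ⟨fun hu => R.trans hu huv, fun hv => R.trans hv (R.symm huv)⟩
    simp only [f, this]
  have hfxy : f x = f y := h hf x y hS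
  by_contra hR
  simp only [f, R.refl x, hR, if_true, if_false] at hfxy
  exact hb hfxy

theorem constOnClasses_injective [Nontrivial β] :
    Function.Injective fun R : Setoid X => R.constOnClasses β := fun _ _ h =>
  le_antisymm (le_of_constOnClasses_subset h.ge) (le_of_constOnClasses_subset h.le)

end Setoid

theorem mul_ite_one_zero_left_cancel {n : ℕ} (hn : n ≠ 0) {P Q : Prop} [Decidable P]
    [Decidable Q] (h : n * (if P then 1 else 0) = n * (if Q then 1 else 0)) : P ↔ Q := by
  have := mul_left_cancel₀ hn h
  split_ifs at this <;> simp_all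

open Classical in
/-- The combinatorial core of Proposition 4 (faithfulness of the Brauerian functor):
if `p ^ a * [f ∈ F(R)] = p ^ b * [f ∈ F(S)]` for all `f : X → Fin p` (with `p ≥ 2`),
then `a = b` and `R = S`. -/
theorem brauerian_faithful_core (X : Type*) (p : ℕ) (hp : 2 ≤ p)
    (R S : Setoid X) (a b : ℕ)
    (h : ∀ f : X → Fin p,
      p ^ a * (if f ∈ {f : X → Fin p | ∀ x y, R.r x y → f x = f y} then 1 else 0) =
        p ^ b * (if f ∈ {f : X → Fin p | ∀ x y, S.r x y → f x = f y} then 1 else 0)) :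
    a = b ∧ R = S := by
  change ∀ f, p ^ a * (if f ∈ R.constOnClasses (Fin p) then 1 else 0) =
    p ^ b * (if f ∈ S.constOnClasses (Fin p) then 1 else 0) at h
  have : Nontrivial (Fin p) := Fin.nontrivial_iff_two_le.mpr hp
  have hab : a = b := by
    have hc := h fun _ => ⟨0, by omega⟩
    rw [if_pos (R.const_mem_constOnClasses _), if_pos (S.const_mem_constOnClasses _),
      mul_one, mul_one] at hc
    exact Nat.pow_right_injective hp hc
  subst hab
  refine ⟨rfl, Setoid.constOnClasses_injective (β := Fin p) (Set.ext fun f => ?_)⟩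
  exact mul_ite_one_zero_left_cancel (pow_ne_zero a (by omega)) (h f)
end
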